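/- arXiv:2105.11317 — 2 statements merged into one kernel-verified Lean document; each statement's English description precedes it below -/
import Mathlib

section
/- Let G be a finite connected graph, with d and D the minimum and maximum of γ_{2,2}(Ḡ) over all orientations Ḡ of G. Then for every integer b with d ≤ b ≤ D, there exists an orientation Ḡ_b of G with γ_{2,2}(Ḡ_b) = b. -/
open Finset

/-- `DReach A n u v`: there is a directed walk of length `n` from `u` to `v`
in the digraph with arc relation `A`. -/
def DReach {V : Type*} (A : V → V → Prop) : ℕ → V → V → Prop
  | 0, u, v => u = v
  | n + 1, u, v => ∃ w, A u w ∧ DReach A n w v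

/-- The signal a broadcasting vertex `u` of strength `t` sends to `w`:
`t - d(u,w)` where `d` is the directed distance (0 if `d(u,w) ≥ t` or `w` unreachable). -/
noncomputable def dsignal {V : Type*} (A : V → V → Prop) (t : ℕ) (u w : V) : ℕ :=
  sSup {m : ℕ | ∃ n : ℕ, DReach A n u w ∧ m = t - n}

/-- The directed reception at `w` from the broadcast set `S` of strength `t`. -/
noncomputable def dreception {V : Type*} [Fintype V] (A : V → V → Prop) (t : ℕ)
    (S : Finset V) (w : V) : ℕ :=
  ∑ v ∈ S, dsignal A t v w

/-- `S` is a directed `(t,r)` broadcast dominating set of the digraph `A`. -/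
def IsDomSet {V : Type*} [Fintype V] (A : V → V → Prop) (t r : ℕ) (S : Finset V) : Prop :=
  ∀ w : V, r ≤ dreception A t S w

/-- The directed `(t,r)` broadcast domination number of the digraph `A`. -/
noncomputable def gamma {V : Type*} [Fintype V] (A : V → V → Prop) (t r : ℕ) : ℕ :=
  sInf {k : ℕ | ∃ S : Finset V, IsDomSet A t r S ∧ S.card = k}

/-- `A` is an orientation of the simple graph `G`: every arc is along an edge of `G`,
and each edge of `G` is directed in exactly one of the two directions. -/
def IsOrientation {V : Type*} (G : SimpleGraph V) (A : V → V → Prop) : Prop :=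
  (∀ u v, A u v → G.Adj u v) ∧ ∀ u v, G.Adj u v → (A u v ↔ ¬ A v u)

/-- `A₁` is obtained from `A₀` by reversing (flipping) a single arc. -/
def OneFlip {V : Type*} (A₀ A₁ : V → V → Prop) : Prop :=
  ∃ a b, A₀ a b ∧ A₁ b a ∧
    ∀ u v, ¬((u = a ∧ v = b) ∨ (u = b ∧ v = a)) → (A₀ u v ↔ A₁ u v)

/-- The star graph on `n` vertices: vertex with value `0` is the center. -/
def starGraph (n : ℕ) : SimpleGraph (Fin n) where
  Adj u v := u ≠ v ∧ (u.val = 0 ∨ v.val = 0)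
  symm := by constructor; intro u v h; exact ⟨h.1.symm, h.2.symm⟩
  loopless := by constructor; intro u h; exact h.1 rfl

/-!
With strength 2 a vertex sends 2 to itself, 1 to its out-neighbours and nothing further.
Reversing a single arc `a → b` can therefore lower a reception only at `b`, which loses the
signal of `a`; adding `b` to a dominating set repairs this, so one reversal raises `γ_{2,r}`
by at most one. Any orientation is turned into any other by reversing the arcs on which they
disagree one at a time, and along such a sequence from a minimising to a maximising
orientation `γ_{2,2}` passes through every intermediate value.
-/

section Orientation

open scoped Classical

variable {V : Type*}

lemma dsignal_two (A : V → V → Prop) (u w : V) :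
    dsignal A 2 u w = if u = w then 2 else if A u w then 1 else 0 := by
  have hub : ∀ m ∈ {m : ℕ | ∃ n, DReach A n u w ∧ m = 2 - n},
      m ≤ if u = w then 2 else if A u w then 1 else 0 := by
    rintro _ ⟨_ | _ | n, hn, rfl⟩
    · simp [show u = w from hn]
    · obtain ⟨x, hux, rfl⟩ := hn
      split_ifs <;> omega
    · omega
  refine le_antisymm (csSup_le' hub) ?_
  split_ifs with huw hA
  · exact le_csSup ⟨_, hub⟩ ⟨0, huw, rfl⟩
  · exact le_csSup ⟨_, hub⟩ ⟨1, ⟨w, hA, rfl⟩, rfl⟩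
  · exact Nat.zero_le _

def flipArc (A : V → V → Prop) (a b : V) (u v : V) : Prop :=
  (u = b ∧ v = a) ∨ (A u v ∧ ¬(u = a ∧ v = b) ∧ ¬(u = b ∧ v = a))

lemma oneFlip_flipArc {A : V → V → Prop} {a b : V} (hab : A a b) :
    OneFlip A (flipArc A a b) :=
  ⟨a, b, hab, Or.inl ⟨rfl, rfl⟩, fun u v huv => by unfold flipArc; tauto⟩

lemma IsOrientation.flipArc {G : SimpleGraph V} {A : V → V → Prop} (hA : IsOrientation G A)
    {a b : V} (hab : A a b) : IsOrientation G (flipArc A a b) := by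
  have hGab : G.Adj a b := hA.1 a b hab
  have hnba : ¬ A b a := (hA.2 a b hGab).mp hab
  refine ⟨?_, fun u v hGuv => ?_⟩
  · rintro u v (⟨rfl, rfl⟩ | ⟨huv, -⟩)
    exacts [hGab.symm, hA.1 u v huv]
  · have huv := hA.2 u v hGuv
    have hne : u ≠ v := hGuv.ne
    unfold _root_.flipArc
    by_cases hua : u = a <;> by_cases hub : u = b <;> by_cases hva : v = a <;>
      by_cases hvb : v = b <;> subst_vars <;> tauto

variable [Fintype V] {r : ℕ}

lemma two_le_dreception_of_mem (A : V → V → Prop) {S : Finset V} {w : V} (hw : w ∈ S) :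
    2 ≤ dreception A 2 S w :=
  calc 2 = dsignal A 2 w w := by simp [dsignal_two]
    _ ≤ dreception A 2 S w :=
      Finset.single_le_sum (f := fun v => dsignal A 2 v w) (fun _ _ => Nat.zero_le _) hw

lemma isDomSet_univ (A : V → V → Prop) (hr : r ≤ 2) : IsDomSet A 2 r Finset.univ :=
  fun _ => hr.trans (two_le_dreception_of_mem A (Finset.mem_univ _))

lemma exists_isDomSet_card_eq_gamma (A : V → V → Prop) (hr : r ≤ 2) :
    ∃ S : Finset V, IsDomSet A 2 r S ∧ S.card = gamma A 2 r :=
  Nat.sInf_mem (s := {k | ∃ S : Finset V, IsDomSet A 2 r S ∧ S.card = k})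
    ⟨_, Finset.univ, isDomSet_univ A hr, rfl⟩

lemma gamma_le_card {A : V → V → Prop} {S : Finset V} (hS : IsDomSet A 2 r S) :
    gamma A 2 r ≤ S.card :=
  Nat.sInf_le ⟨S, hS, rfl⟩

lemma gamma_le_gamma_add_one_of_oneFlip {A A' : V → V → Prop} (hflip : OneFlip A A')
    (hr : r ≤ 2) : gamma A' 2 r ≤ gamma A 2 r + 1 := by
  obtain ⟨a, b, hab, hba, hsame⟩ := hflip
  obtain ⟨S, hS, hcard⟩ := exists_isDomSet_card_eq_gamma A hr
  have hsignal : ∀ v w, w ≠ b → dsignal A 2 v w ≤ dsignal A' 2 v w := by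
    intro v w hwb
    have hvw : A v w → A' v w := fun h =>
      if hba' : v = b ∧ w = a then hba'.1 ▸ hba'.2 ▸ hba
      else (hsame v w (by tauto)).mp h
    simp only [dsignal_two]
    split_ifs <;> tauto
  have hdom : IsDomSet A' 2 r (insert b S) := by
    intro w
    by_cases hwb : w = b
    · exact hr.trans (two_le_dreception_of_mem A' (hwb ▸ Finset.mem_insert_self b S))
    · calc r ≤ dreception A 2 S w := hS w
        _ ≤ dreception A' 2 S w := Finset.sum_le_sum fun v _ => hsignal v w hwb
        _ ≤ dreception A' 2 (insert b S) w :=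
          Finset.sum_le_sum_of_subset (Finset.subset_insert _ _)
  calc gamma A' 2 r ≤ (insert b S).card := gamma_le_card hdom
    _ ≤ S.card + 1 := Finset.card_insert_le _ _
    _ = gamma A 2 r + 1 := by rw [hcard]

noncomputable def arcDiff (A A' : V → V → Prop) : Finset (V × V) :=
  Finset.univ.filter fun p => A p.1 p.2 ∧ ¬ A' p.1 p.2

variable {G : SimpleGraph V} {A A' : V → V → Prop}

lemma IsOrientation.eq_of_arcDiff_eq_empty (hA : IsOrientation G A)
    (hA' : IsOrientation G A') (h : arcDiff A A' = ∅) : A = A' := by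
  have hsub : ∀ u v, A u v → A' u v := fun u v huv => by
    by_contra h'
    simpa [h] using (show (u, v) ∈ arcDiff A A' by simp [arcDiff, huv, h'])
  ext u v
  refine ⟨hsub u v, fun h'uv => by_contra fun huv => ?_⟩
  have hGvu : G.Adj v u := (hA'.1 u v h'uv).symm
  exact (hA'.2 v u hGvu).mp (hsub v u ((hA.2 v u hGvu).mpr huv)) h'uv

lemma arcDiff_flipArc (hA : IsOrientation G A) (hA' : IsOrientation G A') {a b : V}
    (hmem : (a, b) ∈ arcDiff A A') :
    arcDiff (flipArc A a b) A' = (arcDiff A A').erase (a, b) := by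
  simp only [arcDiff, Finset.mem_filter, Finset.mem_univ, true_and] at hmem
  obtain ⟨hab, hnab⟩ := hmem
  have hGab : G.Adj a b := hA.1 a b hab
  have h'ba : A' b a := (hA'.2 b a hGab.symm).mpr hnab
  have hnba : ¬ A b a := (hA.2 a b hGab).mp hab
  ext ⟨u, v⟩
  simp only [arcDiff, Finset.mem_erase, Finset.mem_filter, Finset.mem_univ, true_and]
  simp only [flipArc, ne_eq, Prod.mk.injEq]
  constructor
  · rintro ⟨⟨rfl, rfl⟩ | ⟨huv, hne, -⟩, h'uv⟩
    exacts [absurd h'ba h'uv, ⟨hne, huv, h'uv⟩]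
  · rintro ⟨hne, huv, h'uv⟩
    exact ⟨Or.inr ⟨huv, hne, by rintro ⟨rfl, rfl⟩; exact hnba huv⟩, h'uv⟩

theorem exists_isOrientation_gamma_eq (hr : r ≤ 2) (hA : IsOrientation G A)
    (hA' : IsOrientation G A') {k : ℕ} (hAk : gamma A 2 r ≤ k) (hkA' : k ≤ gamma A' 2 r) :
    ∃ B : V → V → Prop, IsOrientation G B ∧ gamma B 2 r = k := by
  induction hn : (arcDiff A A').card generalizing A with
  | zero =>
    rw [hA.eq_of_arcDiff_eq_empty hA' (Finset.card_eq_zero.mp hn)] at hAk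
    exact ⟨A', hA', le_antisymm hAk hkA'⟩
  | succ n ih =>
    obtain hAk | hAk := hAk.eq_or_lt
    · exact ⟨A, hA, hAk⟩
    obtain ⟨⟨a, b⟩, hmem⟩ := (Finset.card_pos (s := arcDiff A A')).mp (by omega)
    have hab : A a b := (Finset.mem_filter.mp hmem).2.1
    refine ih (hA.flipArc hab) ?_ ?_
    · have := gamma_le_gamma_add_one_of_oneFlip (oneFlip_flipArc hab) hr
      omega
    · rw [arcDiff_flipArc hA hA' hmem, Finset.card_erase_of_mem hmem, hn, Nat.add_sub_cancel]

end Orientation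

theorem stmt3_general {V : Type*} [Fintype V] (G : SimpleGraph V)
    (d D : ℕ)
    (hd : IsLeast {k : ℕ | ∃ A : V → V → Prop, IsOrientation G A ∧ gamma A 2 2 = k} d)
    (hD : IsGreatest {k : ℕ | ∃ A : V → V → Prop, IsOrientation G A ∧ gamma A 2 2 = k} D) :
    ∀ b : ℕ, d ≤ b → b ≤ D →
      ∃ A : V → V → Prop, IsOrientation G A ∧ gamma A 2 2 = b := by
  intro b hdb hbD
  obtain ⟨Amin, hAmin, rfl⟩ := hd.1
  obtain ⟨Amax, hAmax, rfl⟩ := hD.1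
  exact exists_isOrientation_gamma_eq le_rfl hAmin hAmax hdb hbD

theorem stmt3 {V : Type*} [Fintype V] (G : SimpleGraph V) (hconn : G.Connected)
    (d D : ℕ)
    (hd : IsLeast {k : ℕ | ∃ A : V → V → Prop, IsOrientation G A ∧ gamma A 2 2 = k} d)
    (hD : IsGreatest {k : ℕ | ∃ A : V → V → Prop, IsOrientation G A ∧ gamma A 2 2 = k} D) :
    ∀ b : ℕ, d ≤ b → b ≤ D →
      ∃ A : V → V → Prop, IsOrientation G A ∧ gamma A 2 2 = b :=
  stmt3_general G d D hd hD
end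

section
/- Let S_n be the star graph on n ≥ 3 vertices and let t = r > 2. Then the set of values γ_{t,r}(Ḡ) over all orientations Ḡ of S_n is exactly {2, 3, ..., n}. In particular, the minimum over orientations is 2, the maximum is n, and every intermediate integer value is attained. -/
open Finset

/-!
Orient the star with centre `c` so that the leaves in `σ` are sources and the others sinks.
Nothing reaches a source, so every dominating set contains `σ`; a sink hears `t - 2` from each
source and `t - 1` from the centre, and the centre hears `t - 1` from each source. Hence `σ`
alone dominates as soon as `t ≤ |σ| (t - 2)`, and otherwise `σ ∪ {c}` is optimal, which makes
every value `2 ≤ k < |V|` a domination number; `σ = ∅` forces all vertices and gives `|V|`.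
Conversely, in any digraph a vertex outside a set `S` with `|S| ≤ 1` hears at most `t - 1`,
so every orientation has domination number at least `2`.
-/

section Digraph

variable {V : Type*} {A : V → V → Prop} {t : ℕ}

theorem DReach.exists_last {k : ℕ} {u w : V} (h : DReach A (k + 1) u w) :
    ∃ x, DReach A k u x ∧ A x w := by
  induction k generalizing u with
  | zero =>
    obtain ⟨x, hux, rfl⟩ := h
    exact ⟨u, rfl, hux⟩
  | succ k ih =>
    obtain ⟨y, huy, hy⟩ := h
    obtain ⟨x, hyx, hxw⟩ := ih hy
    exact ⟨x, ⟨y, huy, hyx⟩, hxw⟩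

variable (A t) in
theorem dsignal_le (u w : V) : dsignal A t u w ≤ t :=
  csSup_le' <| by rintro m ⟨k, -, rfl⟩; omega

variable (A t) in
theorem dsignal_self (u : V) : dsignal A t u u = t :=
  (dsignal_le A t u u).antisymm <|
    le_csSup ⟨t, by rintro m ⟨k, -, rfl⟩; omega⟩ ⟨0, rfl, rfl⟩

theorem dsignal_le_sub_one {u w : V} (hne : u ≠ w) : dsignal A t u w ≤ t - 1 :=
  csSup_le' <| by
    rintro m ⟨_ | k, hk, rfl⟩
    · exact absurd hk hne
    · omega

theorem dsignal_eq_of_forall_le {d : ℕ} {u w : V} (hd : DReach A d u w)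
    (hmin : ∀ k, DReach A k u w → d ≤ k) : dsignal A t u w = t - d :=
  IsGreatest.csSup_eq ⟨⟨d, hd, rfl⟩, by rintro m ⟨k, hk, rfl⟩; have := hmin k hk; omega⟩

theorem dsignal_of_arc {u w : V} (huw : A u w) (hne : u ≠ w) : dsignal A t u w = t - 1 :=
  dsignal_eq_of_forall_le ⟨w, huw, rfl⟩ fun _ hk =>
    Nat.one_le_iff_ne_zero.2 (by rintro rfl; exact hne hk)

theorem dsignal_of_arc_of_arc {u x w : V} (hux : A u x) (hxw : A x w) (hne : u ≠ w)
    (huw : ¬A u w) : dsignal A t u w = t - 2 :=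
  dsignal_eq_of_forall_le ⟨x, hux, w, hxw, rfl⟩ fun k hk => by
    match k, hk with
    | 0, hk => exact absurd hk hne
    | 1, ⟨y, huy, (hyw : y = w)⟩ => exact absurd (hyw ▸ huy) huw
    | _ + 2, _ => omega

theorem dsignal_eq_zero_of_not_dreach {u w : V} (h : ∀ k, ¬DReach A k u w) :
    dsignal A t u w = 0 :=
  Nat.eq_zero_of_le_zero <| csSup_le' <| by rintro m ⟨k, hk, -⟩; exact absurd hk (h k)

theorem dsignal_eq_zero_of_no_out_arc {u w : V} (hu : ∀ x, ¬A u x) (hne : u ≠ w) :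
    dsignal A t u w = 0 :=
  dsignal_eq_zero_of_not_dreach fun k hk => by
    rcases k with _ | k
    · exact hne hk
    · obtain ⟨x, hux, -⟩ := hk
      exact hu x hux

theorem dsignal_eq_zero_of_no_in_arc {u w : V} (hw : ∀ x, ¬A x w) (hne : u ≠ w) :
    dsignal A t u w = 0 :=
  dsignal_eq_zero_of_not_dreach fun k hk => by
    rcases k with _ | k
    · exact hne hk
    · obtain ⟨x, -, hxw⟩ := hk.exists_last
      exact hw x hxw

variable [Fintype V] {r : ℕ} {S : Finset V}

theorem le_dreception_of_mem {w : V} (hw : w ∈ S) : t ≤ dreception A t S w :=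
  (dsignal_self A t w).ge.trans <|
    single_le_sum (f := fun v => dsignal A t v w) (fun _ _ => Nat.zero_le _) hw

theorem isDomSet_univ_s7 (hrt : r ≤ t) : IsDomSet A t r univ :=
  fun w => hrt.trans (le_dreception_of_mem (mem_univ w))

theorem mem_of_isDomSet_of_no_in_arc {w : V} (hr : 0 < r) (hS : IsDomSet A t r S)
    (hw : ∀ x, ¬A x w) : w ∈ S := by
  by_contra hwS
  have hrec := hS w
  rw [dreception, sum_eq_zero fun v hv =>
    dsignal_eq_zero_of_no_in_arc hw (ne_of_mem_of_not_mem hv hwS)] at hrec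
  omega

theorem two_le_card_of_isDomSet (hV : 2 ≤ Fintype.card V) (ht : 0 < t)
    (hS : IsDomSet A t t S) : 2 ≤ #S := by
  by_contra! hS1
  obtain ⟨w, -, hwS⟩ := exists_mem_notMem_of_card_lt_card (s := S) (t := univ)
    (by rw [card_univ]; omega)
  have hrec : dreception A t S w ≤ #S * (t - 1) := by
    simpa only [dreception, smul_eq_mul] using sum_le_card_nsmul S _ _ fun v hv =>
      dsignal_le_sub_one (A := A) (ne_of_mem_of_not_mem hv hwS)
  have : #S * (t - 1) ≤ 1 * (t - 1) := Nat.mul_le_mul_right _ (by omega)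
  have := hS w
  omega

theorem gamma_eq_card (hS : IsDomSet A t r S) (hmin : ∀ S', IsDomSet A t r S' → #S ≤ #S') :
    gamma A t r = #S :=
  IsLeast.csInf_eq ⟨⟨S, hS, rfl⟩, by rintro _ ⟨S', hS', rfl⟩; exact hmin S' hS'⟩

theorem gamma_le_card_s7 (hrt : r ≤ t) : gamma A t r ≤ Fintype.card V :=
  Nat.sInf_le ⟨univ, isDomSet_univ_s7 hrt, card_univ⟩

theorem two_le_gamma (hV : 2 ≤ Fintype.card V) (ht : 0 < t) : 2 ≤ gamma A t t :=
  le_csInf ⟨_, univ, isDomSet_univ_s7 le_rfl, rfl⟩ fun _ ⟨_, hS, hk⟩ =>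
    hk ▸ two_le_card_of_isDomSet hV ht hS

end Digraph

section StarOrientation

variable {V : Type*} {c : V} {σ : Finset V} {t : ℕ}

def starOrient (c : V) (σ : Finset V) (u v : V) : Prop :=
  (v = c ∧ u ∈ σ) ∨ (u = c ∧ v ≠ c ∧ v ∉ σ)

theorem starOrient_no_in_arc (h0 : c ∉ σ) {a : V} (ha : a ∈ σ) (x : V) :
    ¬starOrient c σ x a := by
  rintro (⟨rfl, -⟩ | ⟨-, -, hna⟩)
  exacts [h0 ha, hna ha]

theorem starOrient_no_out_arc {w : V} (hwc : w ≠ c) (hwσ : w ∉ σ) (x : V) :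
    ¬starOrient c σ w x := by
  rintro (⟨-, hw⟩ | ⟨rfl, -⟩)
  exacts [hwσ hw, hwc rfl]

theorem dsignal_starOrient_source_center (h0 : c ∉ σ) {a : V} (ha : a ∈ σ) :
    dsignal (starOrient c σ) t a c = t - 1 :=
  dsignal_of_arc (.inl ⟨rfl, ha⟩) (ne_of_mem_of_not_mem ha h0)

theorem dsignal_starOrient_center_sink {w : V} (hwc : w ≠ c) (hwσ : w ∉ σ) :
    dsignal (starOrient c σ) t c w = t - 1 :=
  dsignal_of_arc (.inr ⟨rfl, hwc, hwσ⟩) hwc.symm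

theorem dsignal_starOrient_source_sink (h0 : c ∉ σ) {a w : V} (ha : a ∈ σ) (hwc : w ≠ c)
    (hwσ : w ∉ σ) : dsignal (starOrient c σ) t a w = t - 2 := by
  refine dsignal_of_arc_of_arc (.inl ⟨rfl, ha⟩) (.inr ⟨rfl, hwc, hwσ⟩)
    (ne_of_mem_of_not_mem ha hwσ) ?_
  rintro (⟨rfl, -⟩ | ⟨rfl, -⟩)
  exacts [hwc rfl, h0 ha]

variable [Fintype V]

theorem dreception_starOrient_sources_center (h0 : c ∉ σ) :
    dreception (starOrient c σ) t σ c = #σ * (t - 1) := by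
  rw [dreception, sum_congr rfl fun a ha => dsignal_starOrient_source_center h0 ha,
    sum_const, smul_eq_mul]

theorem dreception_starOrient_sources_sink (h0 : c ∉ σ) {w : V} (hwc : w ≠ c) (hwσ : w ∉ σ) :
    dreception (starOrient c σ) t σ w = #σ * (t - 2) := by
  rw [dreception, sum_congr rfl fun a ha => dsignal_starOrient_source_sink h0 ha hwc hwσ,
    sum_const, smul_eq_mul]

theorem subset_of_isDomSet_starOrient (h0 : c ∉ σ) (ht : 0 < t) {S : Finset V}
    (hS : IsDomSet (starOrient c σ) t t S) : σ ⊆ S :=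
  fun _ ha => mem_of_isDomSet_of_no_in_arc ht hS (starOrient_no_in_arc h0 ha)

theorem isDomSet_starOrient_sources (h0 : c ∉ σ) (hσ : t ≤ #σ * (t - 2)) :
    IsDomSet (starOrient c σ) t t σ := by
  intro w
  by_cases hwσ : w ∈ σ
  · exact le_dreception_of_mem hwσ
  by_cases hwc : w = c
  · subst hwc
    rw [dreception_starOrient_sources_center h0]
    exact hσ.trans (Nat.mul_le_mul_left _ (by omega))
  · rw [dreception_starOrient_sources_sink h0 hwc hwσ]
    exact hσ

theorem isDomSet_starOrient_insert_center [DecidableEq V] (h0 : c ∉ σ) (ht : 2 < t)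
    (hσ : σ.Nonempty) : IsDomSet (starOrient c σ) t t (insert c σ) := by
  intro w
  by_cases hw : w ∈ insert c σ
  · exact le_dreception_of_mem hw
  obtain ⟨hwc, hwσ⟩ : w ≠ c ∧ w ∉ σ := by simpa only [mem_insert, not_or] using hw
  obtain ⟨a, ha⟩ := hσ
  calc t ≤ (t - 1) + (t - 2) := by omega
    _ = ∑ v ∈ {c, a}, dsignal (starOrient c σ) t v w := by
      rw [sum_pair (ne_of_mem_of_not_mem ha h0).symm, dsignal_starOrient_center_sink hwc hwσ,
        dsignal_starOrient_source_sink h0 ha hwc hwσ]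
    _ ≤ dreception (starOrient c σ) t (insert c σ) w :=
      sum_le_sum_of_subset (insert_subset_insert c (singleton_subset_iff.2 ha))

theorem gamma_starOrient_empty (ht : 0 < t) :
    gamma (starOrient c ∅) t t = Fintype.card V := by
  refine (gamma_eq_card (isDomSet_univ_s7 le_rfl) fun S hS => ?_).trans card_univ
  have hc : c ∈ S := mem_of_isDomSet_of_no_in_arc ht hS fun x => by
    rintro (⟨-, hx⟩ | ⟨-, hcc, -⟩)
    exacts [notMem_empty x hx, hcc rfl]
  refine card_le_card fun w _ => ?_
  by_contra hwS
  have hwc : w ≠ c := (ne_of_mem_of_not_mem hc hwS).symm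
  have hrec : dreception (starOrient c ∅) t S w = t - 1 := by
    rw [dreception, sum_eq_single_of_mem c hc fun v hv hvc =>
      dsignal_eq_zero_of_no_out_arc (starOrient_no_out_arc hvc (notMem_empty v))
        (ne_of_mem_of_not_mem hv hwS)]
    exact dsignal_starOrient_center_sink hwc (notMem_empty w)
  have := hS w
  omega

theorem gamma_starOrient_of_le (h0 : c ∉ σ) (ht : 0 < t) (hσ : t ≤ #σ * (t - 2)) :
    gamma (starOrient c σ) t t = #σ :=
  gamma_eq_card (isDomSet_starOrient_sources h0 hσ) fun _ hS =>
    card_le_card (subset_of_isDomSet_starOrient h0 ht hS)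

theorem gamma_starOrient_of_lt [DecidableEq V] (h0 : c ∉ σ) (ht : 2 < t) (hσ : σ.Nonempty)
    (hσt : #σ * (t - 2) < t) (hV : #σ + 2 ≤ Fintype.card V) :
    gamma (starOrient c σ) t t = #σ + 1 := by
  rw [← card_insert_of_notMem h0]
  refine gamma_eq_card (isDomSet_starOrient_insert_center h0 ht hσ) fun S hS => ?_
  obtain ⟨w, -, hw⟩ := exists_mem_notMem_of_card_lt_card (s := insert c σ) (t := univ)
    (by rw [card_insert_of_notMem h0, card_univ]; omega)
  obtain ⟨hwc, hwσ⟩ : w ≠ c ∧ w ∉ σ := by simpa only [mem_insert, not_or] using hw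
  have hσS := subset_of_isDomSet_starOrient h0 (by omega) hS
  have hSσ : S ≠ σ := by
    rintro rfl
    have := hS w
    rw [dreception_starOrient_sources_sink h0 hwc hwσ] at this
    omega
  rw [card_insert_of_notMem h0]
  exact card_lt_card (ssubset_of_subset_of_ne hσS hSσ.symm)

theorem exists_card_eq_notMem (c : V) {s : ℕ} (hs : s < Fintype.card V) :
    ∃ σ : Finset V, c ∉ σ ∧ #σ = s := by
  classical
  obtain ⟨σ, hσ, hσs⟩ := exists_subset_card_eq (s := univ.erase c) (n := s)
    (by rw [card_erase_of_mem (mem_univ c), card_univ]; omega)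
  exact ⟨σ, fun h => (mem_erase.1 (hσ h)).1 rfl, hσs⟩

theorem exists_gamma_starOrient_eq [DecidableEq V] (c : V) (ht : 2 < t) {k : ℕ} (hk : 2 ≤ k)
    (hkV : k ≤ Fintype.card V) : ∃ σ, c ∉ σ ∧ gamma (starOrient c σ) t t = k := by
  rcases hkV.eq_or_lt with rfl | hkV
  · exact ⟨∅, notMem_empty c, gamma_starOrient_empty (by omega)⟩
  by_cases hkt : t ≤ (k - 1) * (t - 2)
  · obtain ⟨σ, h0, hσk⟩ := exists_card_eq_notMem c hkV
    refine ⟨σ, h0, hσk ▸ gamma_starOrient_of_le h0 (by omega) ?_⟩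
    rw [hσk]
    exact hkt.trans (Nat.mul_le_mul_right _ (by omega))
  · obtain ⟨σ, h0, hσk⟩ := exists_card_eq_notMem c (s := k - 1) (by omega)
    refine ⟨σ, h0, ?_⟩
    rw [gamma_starOrient_of_lt h0 ht (card_pos.1 (by omega)) (by rw [hσk]; omega) (by omega)]
    omega

end StarOrientation

theorem isOrientation_starOrient {n : ℕ} [NeZero n] {σ : Finset (Fin n)} (h0 : 0 ∉ σ) :
    IsOrientation (starGraph n) (starOrient 0 σ) := by
  simp only [IsOrientation, starGraph, starOrient, Fin.val_eq_zero_iff]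
  grind

theorem stmt7 (n : ℕ) (hn : 3 ≤ n) (t r : ℕ) (htr : t = r) (ht : 2 < t) :
    {k : ℕ | ∃ A : Fin n → Fin n → Prop, IsOrientation (starGraph n) A ∧ gamma A t r = k}
      = Set.Icc 2 n := by
  subst htr
  have : NeZero n := ⟨by omega⟩
  ext k
  constructor
  · rintro ⟨A, -, rfl⟩
    exact ⟨two_le_gamma (by rw [Fintype.card_fin]; omega) (by omega),
      (gamma_le_card_s7 le_rfl).trans_eq (Fintype.card_fin n)⟩
  · rintro ⟨hk2, hkn⟩
    obtain ⟨σ, h0, hσ⟩ :=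
      exists_gamma_starOrient_eq (0 : Fin n) ht hk2 (by rwa [Fintype.card_fin])
    exact ⟨starOrient 0 σ, isOrientation_starOrient h0, hσ⟩
end
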